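/- Let k ≥ 3. If u ∈ P_n for some n ∈ ℕ and v is a follower of u (i.e., v is obtained from u by one legal move of the game), then v ∉ P_m for every m ∈ ℕ. -/

import Mathlib

/-- `T n` is the `n`-th triangular number `n(n+1)/2`. -/
def T (n : ℕ) : ℕ := n * (n + 1) / 2

/-- `Pset k n` is the set `Pₙ` of positions `(T n, m₁, …, m_{k-1})` (nondecreasing
`k`-tuples) whose first component is `T n` and whose remaining components sum to
`(k-1)·T n + n` (each of them is automatically `≥ T n` by monotonicity). -/
def Pset (k : ℕ) [NeZero k] (n : ℕ) : Set (Fin k → ℕ) :=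
  {u | Monotone u ∧ u 0 = T n ∧
    ∑ i ∈ Finset.univ.erase 0, u i = (k - 1) * T n + n}

/-- A raw move of the `k`-heap game (before re-sorting): either (i) remove a positive
number of tokens from at least one and at most `k-1` heaps, or (ii) remove the same
positive number `t` of tokens from all `k` heaps (`t` at most the smallest heap). -/
def MoveRaw (k : ℕ) (u w : Fin k → ℕ) : Prop :=
  ((∀ i, w i ≤ u i) ∧ u ≠ w ∧
    (Finset.univ.filter fun i => w i < u i).card ≤ k - 1)
  ∨ (∃ t > 0, ∀ i, u i = w i + t)

/-- `v` is a follower of `u`: `v` is obtained from `u` by one move, with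
the components re-sorted into nondecreasing order. -/
def Follower (k : ℕ) (u v : Fin k → ℕ) : Prop :=
  ∃ w : Fin k → ℕ, MoveRaw k u w ∧ Monotone v ∧ ∃ σ : Equiv.Perm (Fin k), v = w ∘ σ

/-!
Every heap of a position in `Pₘ` lies in `[Tₘ, Tₘ + m]`, its smallest heap is `Tₘ` and its total
is `k Tₘ + m`, a strictly increasing function of `m`.

A move of type (i) leaves some heap `≥ Tₙ` untouched, so the follower can only lie in `Pₘ`
with `Tₙ ≤ Tₘ + m < Tₘ₊₁`, i.e. `n ≤ m`; but the total strictly decreased, forcing `m < n`.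
A move of type (ii) lowers the smallest heap and the total by `t` and `k t`, so `Tₘ = Tₙ - t`
and `k Tₘ + m = k Tₙ + n - k t`; hence `m = n` and `t = 0`.
-/

open Finset

lemma two_mul_T (n : ℕ) : 2 * T n = n * (n + 1) :=
  Nat.mul_div_cancel' (Nat.even_mul_succ_self n).two_dvd

lemma T_succ (n : ℕ) : T (n + 1) = T n + n + 1 := by
  have h := two_mul_T n
  have h' := two_mul_T (n + 1)
  nlinarith

lemma T_mono : Monotone T :=
  monotone_nat_of_le_succ fun n => by rw [T_succ]; omega

lemma le_of_T_le_T_add_self {n m : ℕ} (h : T n ≤ T m + m) : n ≤ m := by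
  by_contra! hmn
  have := T_mono (Nat.succ_le_of_lt hmn)
  rw [T_succ] at this
  omega

lemma strictMono_mul_T_add_self (k : ℕ) : StrictMono fun n => k * T n + n :=
  strictMono_nat_of_lt_succ fun n => by
    rw [T_succ]
    nlinarith

section Pset

variable {k : ℕ} [NeZero k] {n : ℕ} {u : Fin k → ℕ}

lemma T_le_of_mem_Pset (hu : u ∈ Pset k n) (i : Fin k) : T n ≤ u i :=
  hu.2.1 ▸ hu.1 (Fin.zero_le i)

lemma sum_of_mem_Pset (hu : u ∈ Pset k n) : ∑ i, u i = k * T n + n := by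
  obtain ⟨j, rfl⟩ : ∃ j, k = j + 1 := Nat.exists_eq_add_one.2 (NeZero.pos k)
  rw [← add_sum_erase _ u (mem_univ 0), hu.2.1, hu.2.2]
  simp only [add_tsub_cancel_right]
  ring

lemma le_T_add_self_of_mem_Pset (hu : u ∈ Pset k n) (i : Fin k) : u i ≤ T n + n := by
  have hexcess : ∑ j ∈ univ.erase 0, (u j - T n) = n := by
    rw [sum_tsub_distrib _ fun j _ => T_le_of_mem_Pset hu j, hu.2.2, sum_const,
      card_erase_of_mem (mem_univ 0), card_univ, Fintype.card_fin, smul_eq_mul]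
    omega
  have hi : u i - T n ≤ n := by
    by_cases h0 : i = 0
    · rw [h0, hu.2.1]
      omega
    · exact (single_le_sum (f := fun j => u j - T n) (fun j _ => Nat.zero_le _)
        (mem_erase.2 ⟨h0, mem_univ i⟩)).trans_eq hexcess
  omega

end Pset

section Moves

variable {k : ℕ} [NeZero k] {n m : ℕ} {u w : Fin k → ℕ}

lemma exists_not_of_card_filter_lt {α : Type*} [Fintype α] {p : α → Prop} [DecidablePred p]
    (h : (univ.filter p).card < Fintype.card α) : ∃ a, ¬ p a := by
  by_contra! hall
  rw [filter_true_of_mem fun a _ => hall a, card_univ] at h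
  exact lt_irrefl _ h

lemma comp_perm_not_mem_Pset_of_remove_some (hu : u ∈ Pset k n) (hle : ∀ i, w i ≤ u i)
    (hne : u ≠ w) (hcard : (univ.filter fun i => w i < u i).card ≤ k - 1)
    (σ : Equiv.Perm (Fin k)) : w ∘ σ ∉ Pset k m := by
  intro hv
  obtain ⟨i₀, hi₀⟩ : ∃ i, ¬ w i < u i := exists_not_of_card_filter_lt <| by
    rw [Fintype.card_fin]
    have := NeZero.pos k
    omega
  have hnm : n ≤ m := by
    have hw : w i₀ ≤ T m + m := by simpa using le_T_add_self_of_mem_Pset hv (σ.symm i₀)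
    exact le_of_T_le_T_add_self <| (T_le_of_mem_Pset hu i₀).trans <| (not_lt.1 hi₀).trans hw
  obtain ⟨i, hi⟩ := Function.ne_iff.1 hne
  have hsum : ∑ j, w j < ∑ j, u j :=
    sum_lt_sum (fun j _ => hle j) ⟨i, mem_univ i, (hle i).lt_of_ne' hi⟩
  rw [← Equiv.sum_comp σ, ← Function.comp_def, sum_of_mem_Pset hv, sum_of_mem_Pset hu] at hsum
  exact (strictMono_mul_T_add_self k).lt_iff_lt.1 hsum |>.not_ge hnm

lemma comp_perm_not_mem_Pset_of_remove_all (hu : u ∈ Pset k n) {t : ℕ} (ht : 0 < t)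
    (hsub : ∀ i, u i = w i + t) (σ : Equiv.Perm (Fin k)) : w ∘ σ ∉ Pset k m := by
  intro hv
  have hmin_le : T m ≤ w 0 := by simpa using T_le_of_mem_Pset hv (σ.symm 0)
  have hmin_ge : T n ≤ T m + t := by
    rw [← hv.2.1, Function.comp_apply, ← hsub]
    exact T_le_of_mem_Pset hu (σ 0)
  have hT : T n = T m + t := by
    have := hsub 0
    rw [hu.2.1] at this
    omega
  have hsum : k * T n + n = k * T m + m + k * t := by
    rw [← sum_of_mem_Pset hu, ← sum_of_mem_Pset hv, Function.comp_def, Equiv.sum_comp σ w,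
      sum_congr rfl fun i _ => hsub i, sum_add_distrib, sum_const, card_univ, Fintype.card_fin,
      smul_eq_mul]
  rw [hT, mul_add] at hsum
  obtain rfl : n = m := by omega
  omega

end Moves

theorem follower_of_P_not_P_general (k : ℕ) [NeZero k] (n : ℕ)
    (u v : Fin k → ℕ) (hu : u ∈ Pset k n) (hv : Follower k u v) :
    ∀ m, v ∉ Pset k m := by
  intro m
  obtain ⟨w, hmove, -, σ, rfl⟩ := hv
  rcases hmove with ⟨hle, hne, hcard⟩ | ⟨t, ht, hsub⟩
  · exact comp_perm_not_mem_Pset_of_remove_some hu hle hne hcard σ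
  · exact comp_perm_not_mem_Pset_of_remove_all hu ht hsub σ

/-- part (I) of the proof of Theorem 1: any follower of a position
in some `Pₙ` lies in `Pₘ` for no `m`. -/
theorem follower_of_P_not_P (k : ℕ) [NeZero k] (hk : 3 ≤ k) (n : ℕ)
    (u v : Fin k → ℕ) (hu : u ∈ Pset k n) (hv : Follower k u v) :
    ∀ m, v ∉ Pset k m :=
  follower_of_P_not_P_general k n u v hu hv
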